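/- arXiv:1409.1499 — 2 statements merged into one kernel-verified Lean document; each statement's English description precedes it below -/
import Mathlib

section
/- Fix the demand distribution D and let h_1, p_1, h_2, p_2 > 0 satisfy p_1/h_1 < p_2/h_2. Let r^i_∞ denote the infimum of the set of minimizers of r ↦ h_i E[I^r_∞] + p_i E[D] − p_i r over [0, E[D]), for i = 1, 2, and let γ_i := inf_{θ ≥ 0} exp(θ r^i_∞) E[exp(−θ D)]. Then r^1_∞ ≤ r^2_∞ and γ_1 ≤ γ_2; that is, both the optimal constant-order level and the exponential rate γ are nondecreasing in the ratio p/h. -/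
/-!
Both costs have the form `h G(r) - p r + const` with the same `G(r) = E[I^r_∞]`, so the two
optimality inequalities, weighted by `h₂` and `h₁`, show that every minimiser of the first cost
lies below every minimiser of the second. As `sInf ∅ = 0` in `ℝ`, it remains to see that the
second cost has a minimiser whenever the first one does. If `I^r_∞` is integrable for every `r < E[D]`, then `G` is convex,
hence continuous, and blows up as `r ↑ E[D]`: otherwise the centred partial sums would form an
`L¹`-bounded martingale, converge a.s., and force `D_n → E[D]` a.s., i.e. zero variance.
If integrability fails at some `r₀`, the Bochner integral makes `G = 0` on `[r₀, E[D])`, so the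
(positive) cost tends to `0` and has no minimiser at all. Finally `γ` is monotone in `r` for each
`θ`.
-/

open MeasureTheory ProbabilityTheory Finset Filter
open scoped Topology

theorem Real.sInf_le_sInf_of_forall_le {A B : Set ℝ} (hA : ∀ a ∈ A, 0 ≤ a)
    (hB : ∀ b ∈ B, 0 ≤ b) (hne : A.Nonempty → B.Nonempty) (hAB : ∀ a ∈ A, ∀ b ∈ B, a ≤ b) :
    sInf A ≤ sInf B := by
  rcases A.eq_empty_or_nonempty with rfl | ⟨a, ha⟩
  · exact Real.sInf_empty ▸ Real.sInf_nonneg hB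
  · exact (csInf_le ⟨0, hA⟩ ha).trans (le_csInf (hne ⟨a, ha⟩) (hAB a ha))

theorem le_of_isMinOn_of_isMinOn {G : ℝ → ℝ} {s : Set ℝ} {h₁ p₁ c₁ h₂ p₂ c₂ a b : ℝ}
    (hh₁ : 0 < h₁) (hh₂ : 0 < h₂) (hratio : p₁ / h₁ < p₂ / h₂)
    (ha : IsMinOn (fun r => h₁ * G r + c₁ - p₁ * r) s a)
    (hb : IsMinOn (fun r => h₂ * G r + c₂ - p₂ * r) s b) (has : a ∈ s) (hbs : b ∈ s) :
    a ≤ b := by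
  have hab := isMinOn_iff.1 ha b hbs
  have hba := isMinOn_iff.1 hb a has
  rw [div_lt_div_iff₀ hh₁ hh₂] at hratio
  by_contra! hlt
  -- `h₂ × hab + h₁ × hba` reads `(p₂ h₁ - p₁ h₂) (a - b) ≤ 0`.
  nlinarith [mul_le_mul_of_nonneg_left hab hh₂.le, mul_le_mul_of_nonneg_left hba hh₁.le,
    mul_lt_mul_of_pos_right hratio (sub_pos.2 hlt)]

theorem exists_isMinOn_Ico {f : ℝ → ℝ} {a b : ℝ} (hab : a < b)
    (hf : ContinuousOn f (Set.Ico a b)) (hlim : ∀ᶠ r in 𝓝[<] b, f a ≤ f r) :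
    ∃ c ∈ Set.Ico a b, IsMinOn f (Set.Ico a b) c := by
  obtain ⟨t, htb, ht⟩ := (mem_nhdsLT_iff_exists_Ioo_subset' hab).1 hlim
  obtain ⟨s, hts, hsb⟩ := exists_between (max_lt htb hab)
  have hIcc : Set.Icc a s ⊆ Set.Ico a b := Set.Icc_subset_Ico_right hsb
  obtain ⟨c, hc, hmin⟩ := isCompact_Icc.exists_isMinOn
    (Set.nonempty_Icc.2 ((le_max_right _ _).trans hts.le)) (hf.mono hIcc)
  refine ⟨c, hIcc hc, isMinOn_iff.2 fun r hr => ?_⟩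
  rcases le_or_gt r s with hrs | hsr
  · exact isMinOn_iff.1 hmin r ⟨hr.1, hrs⟩
  · exact (isMinOn_iff.1 hmin a ⟨le_rfl, (le_max_right _ _).trans hts.le⟩).trans
      (ht ⟨(le_max_left _ _).trans_lt (hts.trans hsr), hr.2⟩)

theorem not_isMinOn_of_tendsto_zero {ι : Type*} {l : Filter ι} [l.NeBot] {f : ι → ℝ}
    {s : Set ι} {a : ι} (hf : Tendsto f l (𝓝 0)) (hs : s ∈ l) (ha : 0 < f a) :
    ¬ IsMinOn f s a := fun hmin =>
  let ⟨_, hlt, hr⟩ := ((hf.eventually (gt_mem_nhds ha)).and hs).exists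
  (isMinOn_iff.1 hmin _ hr).not_gt hlt

theorem exists_isMinOn_cost {G : ℝ → ℝ} {m h p : ℝ} (hm : 0 < m)
    (hG : ConvexOn ℝ (Set.Iio m) G) (hlim : Tendsto G (𝓝[<] m) atTop) (hh : 0 < h)
    (hp : 0 ≤ p) :
    ∃ c ∈ Set.Ico 0 m, IsMinOn (fun r => h * G r + p * m - p * r) (Set.Ico 0 m) c := by
  have hGc := (hG.continuousOn isOpen_Iio).mono (Set.Ico_subset_Iio_self (a := 0))
  refine exists_isMinOn_Ico hm (by fun_prop) ?_
  have hcost : Tendsto (fun r => h * G r + p * m - p * r) (𝓝[<] m) atTop := by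
    refine tendsto_atTop_mono' _ ?_ (hlim.const_mul_atTop hh)
    filter_upwards [self_mem_nhdsWithin] with r (hr : r < m)
    nlinarith
  exact hcost.eventually_ge_atTop _

theorem sInf_image_mul_exp_mono {L : ℝ → ℝ} (hL : ∀ θ, 0 ≤ L θ) {r r' : ℝ}
    (hrr' : r ≤ r') :
    sInf ((fun θ => Real.exp (θ * r) * L θ) '' Set.Ici 0)
      ≤ sInf ((fun θ => Real.exp (θ * r') * L θ) '' Set.Ici 0) := by
  refine le_csInf (Set.nonempty_Ici.image _) ?_
  rintro _ ⟨θ, hθ, rfl⟩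
  have hbdd : BddBelow ((fun θ => Real.exp (θ * r) * L θ) '' Set.Ici 0) :=
    ⟨0, by rintro _ ⟨θ, -, rfl⟩; exact mul_nonneg (Real.exp_pos _).le (hL θ)⟩
  exact (csInf_le hbdd (Set.mem_image_of_mem _ hθ)).trans <| mul_le_mul_of_nonneg_right
    (Real.exp_le_exp.2 (mul_le_mul_of_nonneg_left hrr' hθ)) (hL θ)

/-- The paper's `I^r_∞`, evaluated along one demand path `x`. -/
noncomputable def walkSup (x : ℕ → ℝ) (r : ℝ) : ℝ :=
  ⨆ j : ℕ, ((j : ℝ) * r - ∑ i ∈ range j, x i)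

theorem walkSup_nonneg (x : ℕ → ℝ) (r : ℝ) : 0 ≤ walkSup x r := by
  by_cases hb : BddAbove (Set.range fun j : ℕ => (j : ℝ) * r - ∑ i ∈ range j, x i)
  · simpa [walkSup] using le_ciSup hb 0
  · rw [walkSup, iSup, csSup_of_not_bddAbove hb, Real.sSup_empty]

section walkSup

variable {x : ℕ → ℝ} {m r r' : ℝ}

theorem bddAbove_range_mul_sub_sum
    (hx : Tendsto (fun n : ℕ => (∑ i ∈ range n, x i) / n) atTop (𝓝 m)) (hr : r < m) :
    BddAbove (Set.range fun j : ℕ => (j : ℝ) * r - ∑ i ∈ range j, x i) := by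
  refine IsBoundedUnder.bddAbove_range (isBoundedUnder_of_eventually_le (a := 0) ?_)
  filter_upwards [hx.eventually (eventually_gt_nhds hr), eventually_gt_atTop 0] with j hj hj0
  have := (lt_div_iff₀ (Nat.cast_pos.2 hj0)).1 hj
  linarith

theorem le_walkSup (hx : Tendsto (fun n : ℕ => (∑ i ∈ range n, x i) / n) atTop (𝓝 m))
    (hr : r < m) (n : ℕ) : (n : ℝ) * r - ∑ i ∈ range n, x i ≤ walkSup x r :=
  le_ciSup (bddAbove_range_mul_sub_sum hx hr) n

theorem walkSup_mono (hx : Tendsto (fun n : ℕ => (∑ i ∈ range n, x i) / n) atTop (𝓝 m))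
    (hr' : r' < m) (hrr' : r ≤ r') : walkSup x r ≤ walkSup x r' :=
  ciSup_mono (bddAbove_range_mul_sub_sum hx hr') fun _ => by gcongr

theorem walkSup_convex_comb_le
    (hx : Tendsto (fun n : ℕ => (∑ i ∈ range n, x i) / n) atTop (𝓝 m)) (hr : r < m)
    (hr' : r' < m) {a b : ℝ} (ha : 0 ≤ a) (hb : 0 ≤ b) (hab : a + b = 1) :
    walkSup x (a * r + b * r') ≤ a * walkSup x r + b * walkSup x r' := by
  refine ciSup_le fun j => ?_
  have hsplit : (j : ℝ) * (a * r + b * r') - ∑ i ∈ range j, x i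
      = a * ((j : ℝ) * r - ∑ i ∈ range j, x i) + b * ((j : ℝ) * r' - ∑ i ∈ range j, x i) := by
    linear_combination (∑ i ∈ range j, x i) * hab
  rw [hsplit]
  exact add_le_add (mul_le_mul_of_nonneg_left (le_walkSup hx hr j) ha)
    (mul_le_mul_of_nonneg_left (le_walkSup hx hr' j) hb)

end walkSup

section demand

variable {Ω : Type*} [MeasurableSpace Ω] {μ : Measure Ω} {D : ℕ → Ω → ℝ} {m : ℝ}

noncomputable def meanWalkSup (μ : Measure Ω) (D : ℕ → Ω → ℝ) (r : ℝ) : ℝ :=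
  ∫ ω, walkSup (fun i => D i ω) r ∂μ

theorem measurable_walkSup (hmeas : ∀ i, Measurable (D i)) (r : ℝ) :
    Measurable fun ω => walkSup (fun i => D i ω) r :=
  Measurable.iSup fun _ => measurable_const.sub (Finset.measurable_sum _ fun i _ => hmeas i)

theorem integrable_walkSup_of_le (hmeas : ∀ i, Measurable (D i))
    (hLLN : ∀ᵐ ω ∂μ, Tendsto (fun n : ℕ => (∑ i ∈ range n, D i ω) / n) atTop (𝓝 m))
    {r r' : ℝ} (hrr' : r ≤ r') (hr' : r' < m)
    (hint : Integrable (fun ω => walkSup (fun i => D i ω) r') μ) :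
    Integrable (fun ω => walkSup (fun i => D i ω) r) μ := by
  refine hint.mono' (measurable_walkSup hmeas r).aestronglyMeasurable ?_
  filter_upwards [hLLN] with ω hω
  rw [Real.norm_of_nonneg (walkSup_nonneg _ r)]
  exact walkSup_mono hω hr' hrr'

theorem convexOn_meanWalkSup
    (hLLN : ∀ᵐ ω ∂μ, Tendsto (fun n : ℕ => (∑ i ∈ range n, D i ω) / n) atTop (𝓝 m))
    (hint : ∀ r < m, Integrable (fun ω => walkSup (fun i => D i ω) r) μ) :
    ConvexOn ℝ (Set.Iio m) (meanWalkSup μ D) := by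
  refine ⟨convex_Iio m, fun r hr r' hr' a b ha hb hab => ?_⟩
  have hcomb : a • r + b • r' < m := convex_Iio m hr hr' ha hb hab
  simp only [smul_eq_mul] at hcomb ⊢
  have hint' := ((hint r hr).const_mul a).add ((hint r' hr').const_mul b)
  calc meanWalkSup μ D (a * r + b * r')
      ≤ ∫ ω, (a * walkSup (fun i => D i ω) r + b * walkSup (fun i => D i ω) r') ∂μ :=
        integral_mono_ae (hint _ hcomb) hint' <| by
          filter_upwards [hLLN] with ω hω
          exact walkSup_convex_comb_le hω hr hr' ha hb hab
    _ = a * meanWalkSup μ D r + b * meanWalkSup μ D r' := by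
        rw [integral_add ((hint r hr).const_mul a) ((hint r' hr').const_mul b),
          integral_const_mul, integral_const_mul, meanWalkSup, meanWalkSup]

theorem integral_max_zero_eq_half_integral_abs {Y : Ω → ℝ} (hY : Integrable Y μ)
    (h0 : ∫ ω, Y ω ∂μ = 0) : ∫ ω, max (Y ω) 0 ∂μ = (∫ ω, |Y ω| ∂μ) / 2 := by
  have hpt : ∀ ω, max (Y ω) 0 = (Y ω + |Y ω|) / 2 := fun ω => by
    rcases le_total (Y ω) 0 with h | h
    · rw [max_eq_right h, abs_of_nonpos h]; ring
    · rw [max_eq_left h, abs_of_nonneg h]; ring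
  simp only [hpt, integral_div, integral_add hY hY.abs, h0, zero_add]

theorem not_isMinOn_cost (hmeas : ∀ i, Measurable (D i))
    (hLLN : ∀ᵐ ω ∂μ, Tendsto (fun n : ℕ => (∑ i ∈ range n, D i ω) / n) atTop (𝓝 m))
    (hm : 0 < m) {r₀ : ℝ} (hr₀ : r₀ < m)
    (hni : ¬ Integrable (fun ω => walkSup (fun i => D i ω) r₀) μ) {h p a : ℝ} (hh : 0 ≤ h)
    (hp : 0 < p) (ha : a < m) :
    ¬ IsMinOn (fun r => h * meanWalkSup μ D r + p * m - p * r) (Set.Ico 0 m) a := by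
  have hzero : ∀ r ∈ Set.Ico r₀ m, meanWalkSup μ D r = 0 := fun r hr =>
    integral_undef fun hI => hni (integrable_walkSup_of_le hmeas hLLN hr.1 hr.2 hI)
  have hlin : Tendsto (fun r => p * m - p * r) (𝓝[<] m) (𝓝 0) := by
    have := (Continuous.tendsto (f := fun r => p * m - p * r) (by fun_prop) m).mono_left
      (nhdsWithin_le_nhds (s := Set.Iio m))
    rwa [sub_self] at this
  refine not_isMinOn_of_tendsto_zero (hlin.congr' ?_) (Ico_mem_nhdsLT hm) ?_
  · filter_upwards [Ico_mem_nhdsLT hr₀] with r hr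
    simp [hzero r hr]
  · have hG : 0 ≤ meanWalkSup μ D a := integral_nonneg fun ω => walkSup_nonneg _ a
    nlinarith

variable [IsProbabilityMeasure μ]

/-- At `r` close to `m`, `I^r_∞ ≥ (n r - S_n)⁺` is close to `(n m - S_n)⁺`, whose mean is half
the mean absolute deviation of `S_n`. -/
theorem tendsto_meanWalkSup_nhdsLT_atTop
    (hLLN : ∀ᵐ ω ∂μ, Tendsto (fun n : ℕ => (∑ i ∈ range n, D i ω) / n) atTop (𝓝 m))
    (hint : ∀ r < m, Integrable (fun ω => walkSup (fun i => D i ω) r) μ)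
    (hDint : ∀ i, Integrable (D i) μ) (hmean : ∀ i, ∫ ω, D i ω ∂μ = m)
    (hdev : ∀ K, ∃ n : ℕ, K ≤ ∫ ω, |∑ i ∈ range n, D i ω - n * m| ∂μ) :
    Tendsto (meanWalkSup μ D) (𝓝[<] m) atTop := by
  refine tendsto_atTop.2 fun K => ?_
  obtain ⟨n, hn⟩ := hdev (2 * (K + 1))
  set Y : Ω → ℝ := fun ω => n * m - ∑ i ∈ range n, D i ω
  have hS : Integrable (fun ω => ∑ i ∈ range n, D i ω) μ :=
    integrable_finsetSum _ fun i _ => hDint i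
  have hY : Integrable Y μ := (integrable_const _).sub hS
  have hY0 : ∫ ω, Y ω ∂μ = 0 := by
    simp [Y, integral_sub (integrable_const _) hS, integral_finsetSum _ fun i _ => hDint i,
      hmean]
  have hhalf : K + 1 ≤ ∫ ω, max (Y ω) 0 ∂μ := by
    rw [integral_max_zero_eq_half_integral_abs hY hY0]
    simp only [Y, abs_sub_comm ((n : ℝ) * m)]
    linarith
  filter_upwards [Ioo_mem_nhdsLT (show m - 1 / (n + 1) < m by simp; positivity)] with r hr
  have hnr : (n : ℝ) * (m - r) ≤ 1 := by
    have := hr.1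
    rw [sub_lt_comm, lt_div_iff₀ (by positivity)] at this
    nlinarith [hr.2]
  have hpt : ∀ᵐ ω ∂μ, max (Y ω) 0 ≤ walkSup (fun i => D i ω) r + n * (m - r) := by
    filter_upwards [hLLN] with ω hω
    exact max_le (by linarith [le_walkSup hω hr.2 n])
      (add_nonneg (walkSup_nonneg _ r) (mul_nonneg n.cast_nonneg (by linarith [hr.2])))
  have hmono :
      ∫ ω, max (Y ω) 0 ∂μ ≤ ∫ ω, (walkSup (fun i => D i ω) r + n * (m - r)) ∂μ :=
    integral_mono_ae hY.pos_part ((hint r hr.2).add (integrable_const _)) hpt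
  rw [integral_add (hint r hr.2) (integrable_const _), integral_const, probReal_univ,
    one_smul] at hmono
  rw [meanWalkSup]
  linarith

theorem ProbabilityTheory.iIndepFun.martingale_sum_range_succ {X : ℕ → Ω → ℝ}
    (hX : ∀ i, StronglyMeasurable (X i)) (hindep : iIndepFun X μ)
    (hint : ∀ i, Integrable (X i) μ) (hmean : ∀ i, μ[X i] = 0) :
    Martingale (fun n ω => ∑ i ∈ range (n + 1), X i ω) (Filtration.natural X hX) μ := by
  refine martingale_of_condExp_sub_eq_zero_nat (fun n => ?_)
    (fun n => integrable_finsetSum _ fun i _ => hint i) fun n => ?_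
  · refine Finset.stronglyMeasurable_fun_sum _ fun i hi => ?_
    exact (Filtration.stronglyAdapted_natural hX i).mono
      ((Filtration.natural X hX).mono (Nat.lt_succ_iff.1 (mem_range.1 hi)))
  · have hstep : (fun ω => ∑ i ∈ range (n + 1 + 1), X i ω)
        - (fun ω => ∑ i ∈ range (n + 1), X i ω) = X (n + 1) := by
      funext ω
      simp [Finset.sum_range_succ _ (n + 1)]
    rw [hstep]
    filter_upwards [hindep.condExp_natural_ae_eq_of_lt hX (Nat.lt_succ_self n)] with ω hω
    rw [hω, hmean]
    rfl

theorem ae_eq_const_of_identDistrib_of_ae_tendsto {X : ℕ → Ω → ℝ} {c : ℝ}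
    (hident : ∀ i, IdentDistrib (X i) (X 0) μ μ)
    (hlim : ∀ᵐ ω ∂μ, Tendsto (fun n => X n ω) atTop (𝓝 c)) : X 0 =ᵐ[μ] fun _ => c := by
  have hX : TendstoInMeasure μ X atTop fun _ => c :=
    tendstoInMeasure_of_tendsto_ae
      (fun i => (hident i).aemeasurable_fst.aestronglyMeasurable) hlim
  have hX0 : TendstoInMeasure μ (fun _ : ℕ => X 0) atTop fun _ => c := fun ε hε => by
    have hs : MeasurableSet {y : ℝ | ε ≤ edist y c} :=
      measurableSet_le measurable_const (continuous_id.edist continuous_const).measurable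
    have hconst : ∀ n, μ {x | ε ≤ edist (X n x) c} = μ {x | ε ≤ edist (X 0 x) c} :=
      fun n => (hident n).measure_mem_eq hs
    simpa only [hconst] using hX ε hε
  exact tendstoInMeasure_ae_unique (fun ε hε => by simp [hε.not_ge]) hX0

theorem exists_le_integral_abs_sum_sub (hmeas : ∀ i, Measurable (D i))
    (hindep : iIndepFun D μ) (hident : ∀ i, IdentDistrib (D i) (D 0) μ μ)
    (hint : Integrable (D 0) μ) (hvar : 0 < variance (D 0) μ) (K : ℝ) :
    ∃ n : ℕ, K ≤ ∫ ω, |∑ i ∈ range n, D i ω - n * ∫ ω, D 0 ω ∂μ| ∂μ := by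
  set m := ∫ ω, D 0 ω ∂μ
  by_contra! hK
  set X : ℕ → Ω → ℝ := fun i ω => D i ω - m
  have hXmeas : ∀ i, StronglyMeasurable (X i) :=
    fun i => ((hmeas i).sub_const m).stronglyMeasurable
  have hXint : ∀ i, Integrable (X i) μ :=
    fun i => ((hident i).integrable_iff.2 hint).sub (integrable_const m)
  have hXmean : ∀ i, μ[X i] = 0 := fun i => by
    rw [integral_sub ((hident i).integrable_iff.2 hint) (integrable_const m),
      (hident i).integral_eq]
    simp [m]
  have hM := (hindep.comp (fun _ x => x - m) fun _ => measurable_sub_const m)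
    |>.martingale_sum_range_succ hXmeas hXint hXmean
  have hsum : ∀ n ω, ∑ i ∈ range n, X i ω = ∑ i ∈ range n, D i ω - n * m := fun n ω => by
    simp [X, Finset.sum_sub_distrib]
  have hbdd : ∀ n, eLpNorm (fun ω => ∑ i ∈ range (n + 1), X i ω) 1 μ ≤ .ofReal K := by
    intro n
    rw [eLpNorm_one_eq_lintegral_enorm, ← ofReal_integral_norm_eq_lintegral_enorm
      (integrable_finsetSum _ fun i _ => hXint i)]
    refine ENNReal.ofReal_le_ofReal (le_of_lt ?_)
    simpa only [Real.norm_eq_abs, hsum] using hK (n + 1)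
  have hlim : ∀ᵐ ω ∂μ, Tendsto (fun n => D n ω) atTop (𝓝 m) := by
    filter_upwards [hM.submartingale.ae_tendsto_limitProcess hbdd] with ω hω
    have hdiff := (hω.comp (tendsto_add_atTop_nat 1)).sub hω
    rw [sub_self] at hdiff
    have hX : Tendsto (fun n => X (n + 1) ω) atTop (𝓝 0) := by
      convert hdiff using 2 with n
      simp [Finset.sum_range_succ _ (n + 1)]
    refine (tendsto_add_atTop_iff_nat 1).1 ?_
    simpa [X] using hX.add_const m
  have hae := ae_eq_const_of_identDistrib_of_ae_tendsto hident hlim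
  exact hvar.ne' (by rw [variance_congr hae]; simp [variance, evariance])

end demand

theorem stmt10_general
    {Ω : Type*} [MeasurableSpace Ω] (μ : Measure Ω) [IsProbabilityMeasure μ]
    (D : ℕ → Ω → ℝ)
    (hmeas : ∀ i, Measurable (D i))
    (hindep : iIndepFun D μ)
    (hident : ∀ i, IdentDistrib (D i) (D 0) μ μ)
    (hint : Integrable (D 0) μ)
    (hmean : 0 < ∫ ω, D 0 ω ∂μ)
    (hvar : 0 < variance (D 0) μ)
    (h₁ p₁ h₂ p₂ : ℝ) (hh₁ : 0 < h₁) (hp₁ : 0 < p₁) (hh₂ : 0 < h₂) (hp₂ : 0 < p₂)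
    (hratio : p₁ / h₁ < p₂ / h₂)
    (C₁ C₂ : ℝ → ℝ)
    (hC₁ : ∀ r, C₁ r
      = h₁ * (∫ ω, (⨆ j : ℕ, ((j : ℝ) * r - ∑ i ∈ Finset.range j, D i ω)) ∂μ)
      + p₁ * (∫ ω, D 0 ω ∂μ) - p₁ * r)
    (hC₂ : ∀ r, C₂ r
      = h₂ * (∫ ω, (⨆ j : ℕ, ((j : ℝ) * r - ∑ i ∈ Finset.range j, D i ω)) ∂μ)
      + p₂ * (∫ ω, D 0 ω ∂μ) - p₂ * r)
    (r₁ r₂ : ℝ)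
    (hr₁ : r₁ = sInf {r | r ∈ Set.Ico (0 : ℝ) (∫ ω, D 0 ω ∂μ) ∧
      ∀ r' ∈ Set.Ico (0 : ℝ) (∫ ω, D 0 ω ∂μ), C₁ r ≤ C₁ r'})
    (hr₂ : r₂ = sInf {r | r ∈ Set.Ico (0 : ℝ) (∫ ω, D 0 ω ∂μ) ∧
      ∀ r' ∈ Set.Ico (0 : ℝ) (∫ ω, D 0 ω ∂μ), C₂ r ≤ C₂ r'})
    (γ₁ γ₂ : ℝ)
    (hγ₁ : γ₁ = sInf ((fun θ => Real.exp (θ * r₁) * ∫ ω, Real.exp (-θ * D 0 ω) ∂μ) ''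
      Set.Ici (0 : ℝ)))
    (hγ₂ : γ₂ = sInf ((fun θ => Real.exp (θ * r₂) * ∫ ω, Real.exp (-θ * D 0 ω) ∂μ) ''
      Set.Ici (0 : ℝ))) :
    r₁ ≤ r₂ ∧ γ₁ ≤ γ₂ := by
  set m := ∫ ω, D 0 ω ∂μ
  have hLLN := strong_law_ae_real D hint (fun i j hij => hindep.indepFun hij) hident
  have hDint : ∀ i, Integrable (D i) μ := fun i => (hident i).integrable_iff.2 hint
  have hDmean : ∀ i, ∫ ω, D i ω ∂μ = m := fun i => (hident i).integral_eq
  replace hC₁ : C₁ = fun r => h₁ * meanWalkSup μ D r + p₁ * m - p₁ * r := funext hC₁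
  replace hC₂ : C₂ = fun r => h₂ * meanWalkSup μ D r + p₂ * m - p₂ * r := funext hC₂
  subst hC₁ hC₂
  have hr : r₁ ≤ r₂ := by
    rw [hr₁, hr₂]
    refine Real.sInf_le_sInf_of_forall_le (fun a ha => ha.1.1) (fun b hb => hb.1.1) ?_
      fun a ha b hb => le_of_isMinOn_of_isMinOn hh₁ hh₂ hratio (isMinOn_iff.2 ha.2)
        (isMinOn_iff.2 hb.2) ha.1 hb.1
    rintro ⟨a, ha⟩
    by_cases hI : ∀ r < m, Integrable (fun ω => walkSup (fun i => D i ω) r) μ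
    · obtain ⟨c, hc, hmin⟩ := exists_isMinOn_cost hmean (convexOn_meanWalkSup hLLN hI)
        (tendsto_meanWalkSup_nhdsLT_atTop hLLN hI hDint hDmean
          (exists_le_integral_abs_sum_sub hmeas hindep hident hint hvar)) hh₂ hp₂.le
      exact ⟨c, hc, isMinOn_iff.1 hmin⟩
    · obtain ⟨r₀, hr₀, hni⟩ := not_forall₂.1 hI
      exact absurd (isMinOn_iff.2 ha.2)
        (not_isMinOn_cost hmeas hLLN hmean hr₀ hni hh₁.le hp₁ ha.1.2)
  refine ⟨hr, ?_⟩
  rw [hγ₁, hγ₂]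
  exact sInf_image_mul_exp_mono (fun θ => integral_nonneg fun ω => (Real.exp_pos _).le) hr

/-- **Monotonicity in the ratio `p/h`.** If `p₁/h₁ < p₂/h₂`, then the optimal
constant-order levels satisfy `r¹_∞ ≤ r²_∞`, and the corresponding exponential rates
satisfy `γ₁ ≤ γ₂`. -/
theorem stmt10
    {Ω : Type*} [MeasurableSpace Ω] (μ : Measure Ω) [IsProbabilityMeasure μ]
    (D : ℕ → Ω → ℝ)
    (hmeas : ∀ i, Measurable (D i))
    (hindep : iIndepFun D μ)
    (hident : ∀ i, IdentDistrib (D i) (D 0) μ μ)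
    (hnonneg : ∀ i ω, 0 ≤ D i ω)
    (hint : Integrable (D 0) μ)
    (hmean : 0 < ∫ ω, D 0 ω ∂μ)
    (hvar : 0 < variance (D 0) μ)
    (h₁ p₁ h₂ p₂ : ℝ) (hh₁ : 0 < h₁) (hp₁ : 0 < p₁) (hh₂ : 0 < h₂) (hp₂ : 0 < p₂)
    (hratio : p₁ / h₁ < p₂ / h₂)
    (C₁ C₂ : ℝ → ℝ)
    (hC₁ : ∀ r, C₁ r
      = h₁ * (∫ ω, (⨆ j : ℕ, ((j : ℝ) * r - ∑ i ∈ Finset.range j, D i ω)) ∂μ)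
      + p₁ * (∫ ω, D 0 ω ∂μ) - p₁ * r)
    (hC₂ : ∀ r, C₂ r
      = h₂ * (∫ ω, (⨆ j : ℕ, ((j : ℝ) * r - ∑ i ∈ Finset.range j, D i ω)) ∂μ)
      + p₂ * (∫ ω, D 0 ω ∂μ) - p₂ * r)
    (r₁ r₂ : ℝ)
    (hr₁ : r₁ = sInf {r | r ∈ Set.Ico (0 : ℝ) (∫ ω, D 0 ω ∂μ) ∧
      ∀ r' ∈ Set.Ico (0 : ℝ) (∫ ω, D 0 ω ∂μ), C₁ r ≤ C₁ r'})
    (hr₂ : r₂ = sInf {r | r ∈ Set.Ico (0 : ℝ) (∫ ω, D 0 ω ∂μ) ∧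
      ∀ r' ∈ Set.Ico (0 : ℝ) (∫ ω, D 0 ω ∂μ), C₂ r ≤ C₂ r'})
    (γ₁ γ₂ : ℝ)
    (hγ₁ : γ₁ = sInf ((fun θ => Real.exp (θ * r₁) * ∫ ω, Real.exp (-θ * D 0 ω) ∂μ) ''
      Set.Ici (0 : ℝ)))
    (hγ₂ : γ₂ = sInf ((fun θ => Real.exp (θ * r₂) * ∫ ω, Real.exp (-θ * D 0 ω) ∂μ) ''
      Set.Ici (0 : ℝ))) :
    r₁ ≤ r₂ ∧ γ₁ ≤ γ₂ :=
  stmt10_general μ D hmeas hindep hident hint hmean hvar h₁ p₁ h₂ p₂ hh₁ hp₁ hh₂ hp₂ hratio C₁ C₂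
    hC₁ hC₂ r₁ r₂ hr₁ hr₂ γ₁ γ₂ hγ₁ hγ₂
end

section
/- Let (χ_1, ..., χ_L, I) be a nonnegative integrable random vector that is independent of the i.i.d. sequence D_1, ..., D_L, and suppose E[χ_i] = E[χ_1] for all i ∈ {1, ..., L}. Then E[max_{0 ≤ j ≤ L} (Σ_{i=1}^j (χ_{L+1−i} − D_{L+1−i}) + δ_{j,L} I)] ≥ E[max_{0 ≤ j ≤ L} (j E[χ_1] − Σ_{i=1}^j D_i + δ_{j,L} E[I])]. -/
/-!
By independence, the left-hand side is `E_D[φ(D)]` where `φ(d)` is the expectation, over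
`(χ, I)` alone, of the maximum taken at the fixed demands `d`. A maximum of expectations is at
most the expectation of the maximum, so `φ(d)` dominates the same maximum with `χ` and `I`
replaced by their means. Finally the reversed demand vector `(D_L, …, D_1)` has the same law as
`(D_1, …, D_L)`, which turns the integral of that bound into the right-hand side.
-/

open MeasureTheory ProbabilityTheory Finset

universe u

/-- `max_{0 ≤ j ≤ L} (x 0 + ⋯ + x (j - 1) + δ_{j,L} b)`. -/
def maxPartialSum (L : ℕ) (x : ℕ → ℝ) (b : ℝ) : ℝ :=
  (range (L + 1)).sup' nonempty_range_add_one fun j => (∑ i ∈ range j, x i) + if j = L then b else 0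

theorem maxPartialSum_congr (L : ℕ) {x y : ℕ → ℝ} (h : ∀ i < L, x i = y i) (b : ℝ) :
    maxPartialSum L x b = maxPartialSum L y b :=
  sup'_congr _ rfl fun j hj => by
    rw [sum_congr rfl fun i hi => h i (by simp at hi hj; omega)]

theorem maxPartialSum_const_sub (L : ℕ) (a : ℝ) (x : ℕ → ℝ) (b : ℝ) :
    maxPartialSum L (fun i => a - x i) b = (range (L + 1)).sup' nonempty_range_add_one
      fun j => ((j : ℝ) * a - ∑ i ∈ range j, x i) + if j = L then b else 0 := by
  simp only [maxPartialSum, sum_sub_distrib, sum_const, card_range, nsmul_eq_mul]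

theorem continuous_maxPartialSum (L : ℕ) {X : Type*} [TopologicalSpace X] {x : X → ℕ → ℝ}
    {b : X → ℝ} (hx : ∀ i, Continuous fun p => x p i) (hb : Continuous b) :
    Continuous fun p => maxPartialSum L (x p) (b p) := by
  unfold maxPartialSum
  refine Continuous.finset_sup'_apply _ fun j _ => ?_
  split_ifs <;> fun_prop

section

variable {Ω : Type u} [MeasurableSpace Ω] {μ : Measure Ω}

theorem MeasureTheory.Integrable.finset_sup' {ι : Type*} {s : Finset ι} (hs : s.Nonempty)
    {f : ι → Ω → ℝ} (hf : ∀ j ∈ s, Integrable (f j) μ) :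
    Integrable (fun ω => s.sup' hs (f · ω)) μ := by
  simpa only [← Finset.sup'_apply] using
    Finset.sup'_induction hs f (p := (Integrable · μ)) (fun _ hf _ hg => hf.sup hg) hf

theorem sup'_integral_le_integral_sup' {ι : Type*} {s : Finset ι} (hs : s.Nonempty)
    {f : ι → Ω → ℝ} (hf : ∀ j ∈ s, Integrable (f j) μ) :
    s.sup' hs (fun j => ∫ ω, f j ω ∂μ) ≤ ∫ ω, s.sup' hs (f · ω) ∂μ :=
  Finset.sup'_le _ _ fun j hj =>
    integral_mono (hf j hj) (Integrable.finset_sup' hs hf) fun ω => Finset.le_sup' (f · ω) hj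

theorem ProbabilityTheory.IndepFun.integral_comp_le_integral_comp [IsFiniteMeasure μ]
    {α β : Type*} [MeasurableSpace α] [MeasurableSpace β] {X : Ω → α} {Y : Ω → β}
    (hXY : IndepFun X Y μ) (hX : AEMeasurable X μ) (hY : AEMeasurable Y μ)
    {G : α → β → ℝ} (hG : StronglyMeasurable (Function.uncurry G))
    (hGi : Integrable (fun ω => G (X ω) (Y ω)) μ)
    {ψ : β → ℝ} (hψ : AEStronglyMeasurable ψ (μ.map Y)) (hψi : Integrable (fun ω => ψ (Y ω)) μ)
    (hle : ∀ y, ψ y ≤ ∫ ω, G (X ω) y ∂μ) :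
    ∫ ω, ψ (Y ω) ∂μ ≤ ∫ ω, G (X ω) (Y ω) ∂μ := by
  have hprod := (indepFun_iff_map_prod_eq_prod_map_map hX hY).mp hXY
  have hGi' : Integrable (Function.uncurry G) ((μ.map X).prod (μ.map Y)) := by
    rwa [← hprod, integrable_map_measure hG.aestronglyMeasurable (hX.prodMk hY)]
  calc ∫ ω, ψ (Y ω) ∂μ = ∫ y, ψ y ∂(μ.map Y) := (integral_map hY hψ).symm
    _ ≤ ∫ y, ∫ x, G x y ∂(μ.map X) ∂(μ.map Y) :=
      integral_mono ((integrable_map_measure hψ hY).mpr hψi) hGi'.integral_prod_right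
        fun y => (hle y).trans_eq (integral_map hX (f := (G · y))
          (hG.comp_measurable measurable_prodMk_right).aestronglyMeasurable).symm
    _ = ∫ z, Function.uncurry G z ∂(μ.map fun ω => (X ω, Y ω)) := by
      rw [hprod, integral_prod_symm _ hGi']; rfl
    _ = ∫ ω, G (X ω) (Y ω) ∂μ := integral_map (hX.prodMk hY) hG.aestronglyMeasurable

theorem ProbabilityTheory.iIndepFun.identDistrib_comp_of_injective
    {κ ι : Type*} [Fintype ι] {β : Type*} [MeasurableSpace β] {D : κ → Ω → β}
    (hindep : iIndepFun D μ) (hident : ∀ k l, IdentDistrib (D k) (D l) μ μ)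
    {e e' : ι → κ} (he : e.Injective) (he' : e'.Injective) :
    IdentDistrib (fun ω i => D (e i) ω) (fun ω i => D (e' i) ω) μ μ where
  aemeasurable_fst := aemeasurable_pi_lambda _ fun i => (hident _ (e i)).aemeasurable_fst
  aemeasurable_snd := aemeasurable_pi_lambda _ fun i => (hident _ (e' i)).aemeasurable_fst
  map_eq := by
    rw [(hindep.precomp he).map_fun_eq_pi_map fun i => (hident _ (e i)).aemeasurable_fst,
      (hindep.precomp he').map_fun_eq_pi_map fun i => (hident _ (e' i)).aemeasurable_fst]
    congr 1
    funext i
    exact (hident _ _).map_eq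

theorem integrable_sum_range_add_ite {x : ℕ → Ω → ℝ} {b : Ω → ℝ} (hx : ∀ i, Integrable (x i) μ)
    (hb : Integrable b μ) (j L : ℕ) :
    Integrable (fun ω => (∑ i ∈ range j, x i ω) + if j = L then b ω else 0) μ :=
  (integrable_finsetSum _ fun i _ => hx i).add (by split_ifs <;> simp [hb])

theorem MeasureTheory.Integrable.maxPartialSum (L : ℕ) {x : ℕ → Ω → ℝ} {b : Ω → ℝ}
    (hx : ∀ i, Integrable (x i) μ) (hb : Integrable b μ) :
    Integrable (fun ω => maxPartialSum L (x · ω) (b ω)) μ :=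
  Integrable.finset_sup' _ fun j _ => integrable_sum_range_add_ite hx hb j L

theorem maxPartialSum_integral_le_integral (L : ℕ) {x : ℕ → Ω → ℝ} {b : Ω → ℝ}
    (hx : ∀ i, Integrable (x i) μ) (hb : Integrable b μ) :
    maxPartialSum L (fun i => ∫ ω, x i ω ∂μ) (∫ ω, b ω ∂μ)
      ≤ ∫ ω, maxPartialSum L (x · ω) (b ω) ∂μ := by
  refine (sup'_congr _ rfl fun j _ => ?_).trans_le
    (sup'_integral_le_integral_sup' _ fun j _ => integrable_sum_range_add_ite hx hb j L)
  rw [integral_add (integrable_finsetSum _ fun i _ => hx i) (by split_ifs <;> simp [hb]),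
    integral_finsetSum _ fun i _ => hx i]
  split_ifs <;> simp

end

/-- **Jensen step.** If the nonnegative integrable random vector `(χ₁, …, χ_L, I)` is
independent of the i.i.d. demands `D₁, …, D_L` and `E[χ_i] = E[χ₁]` for all `i`, then
`E[max_{0≤j≤L} (Σ_{i=1}^j (χ_{L+1−i} − D_{L+1−i}) + δ_{j,L} I)]
  ≥ E[max_{0≤j≤L} (j E[χ₁] − Σ_{i=1}^j D_i + δ_{j,L} E[I])]`.
(Coordinates are 0-indexed: `χ k` is `χ_{k+1}` and `D k` is `D_{k+1}`.) -/
theorem stmt12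
    {Ω : Type*} [MeasurableSpace Ω] (μ : Measure Ω) [IsProbabilityMeasure μ]
    (D : ℕ → Ω → ℝ)
    (hindepD : iIndepFun D μ)
    (hidentD : ∀ i, IdentDistrib (D i) (D 0) μ μ)
    (hintD : Integrable (D 0) μ)
    (L : ℕ) (hL : 1 ≤ L)
    (χ : Fin L → Ω → ℝ) (I : Ω → ℝ)
    (hintχ : ∀ i, Integrable (χ i) μ) (hintI : Integrable I μ)
    (hindep : IndepFun (fun ω => ((fun i : Fin L => χ i ω), I ω))
      (fun ω => (fun i : Fin L => D i ω)) μ)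
    (hmeans : ∀ i : Fin L, ∫ ω, χ i ω ∂μ = ∫ ω, χ ⟨0, by omega⟩ ω ∂μ) :
    ∫ ω, (Finset.range (L + 1)).sup' (by simp)
        (fun j =>
          (∑ i ∈ Finset.range j, (χ ⟨L - 1 - i, by omega⟩ ω - D (L - 1 - i) ω))
          + (if j = L then I ω else 0)) ∂μ
      ≥ ∫ ω, (Finset.range (L + 1)).sup' (by simp)
          (fun j =>
            ((j : ℝ) * (∫ ω', χ ⟨0, by omega⟩ ω' ∂μ) - ∑ i ∈ Finset.range j, D i ω)
            + (if j = L then ∫ ω', I ω' ∂μ else 0)) ∂μ := by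
  have hlt (i : ℕ) : L - 1 - i < L := by omega
  set m := ∫ ω', χ ⟨0, by omega⟩ ω' ∂μ
  have hD (k : ℕ) : Integrable (D k) μ := (hidentD k).integrable_iff.mpr hintD
  let G (x : (Fin L → ℝ) × ℝ) (d : Fin L → ℝ) : ℝ :=
    maxPartialSum L (fun i => x.1 ⟨L - 1 - i, hlt i⟩ - d ⟨L - 1 - i, hlt i⟩) x.2
  let ψ (d : Fin L → ℝ) : ℝ := maxPartialSum L (fun i => m - d ⟨L - 1 - i, hlt i⟩) (∫ ω, I ω ∂μ)
  have hG : Continuous (Function.uncurry G) :=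
    continuous_maxPartialSum L (fun i => by fun_prop) (by fun_prop)
  have hψ : Continuous ψ := continuous_maxPartialSum L (fun i => by fun_prop) continuous_const
  have jensen (d : Fin L → ℝ) : ψ d ≤ ∫ ω, G ((fun i => χ i ω), I ω) d ∂μ := by
    convert maxPartialSum_integral_le_integral L
      (x := fun i ω => χ ⟨L - 1 - i, hlt i⟩ ω - d ⟨L - 1 - i, hlt i⟩)
      (fun i => (hintχ _).sub (integrable_const _)) hintI using 3 with i
    rw [integral_sub (hintχ _) (integrable_const _), hmeans]
    simp
  have hDrev : IdentDistrib (fun ω (i : Fin L) => D i ω) (fun ω (i : Fin L) => D (L - 1 - i) ω)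
      μ μ :=
    hindepD.identDistrib_comp_of_injective (fun k l => (hidentD k).trans (hidentD l).symm)
      Fin.val_injective fun i j h => Fin.ext (by omega)
  calc _ = ∫ ω, ψ (fun i => D (L - 1 - i) ω) ∂μ := by
        refine integral_congr_ae (.of_forall fun ω => ?_)
        refine (maxPartialSum_const_sub L m (D · ω) _).symm.trans
          (maxPartialSum_congr L (fun i hi => ?_) _)
        simp only [show L - 1 - (L - 1 - i) = i by omega]
    _ = ∫ ω, ψ (fun i => D i ω) ∂μ := ((hDrev.comp hψ.measurable).integral_eq).symm
    _ ≤ _ := hindep.integral_comp_le_integral_comp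
        ((aemeasurable_pi_lambda _ fun i => (hintχ i).aemeasurable).prodMk hintI.aemeasurable)
        (aemeasurable_pi_lambda _ fun i => (hD i).aemeasurable) hG.stronglyMeasurable
        (Integrable.maxPartialSum L (fun i => (hintχ _).sub (hD _)) hintI)
        hψ.aestronglyMeasurable
        (Integrable.maxPartialSum L (fun i => (integrable_const m).sub (hD _))
          (integrable_const _))
        jensen
end
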